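/- Let M = M* + E ∈ ℝ^{n₁×n₂} where M* has singular values σ₁* ≥ ⋯ ≥ σ_{n₁}* ≥ 0. Let U* ∈ ℝ^{n₁×r} (resp. U ∈ ℝ^{n₁×r}) be the matrix of top-r left singular vectors of M* (resp. M). If σ_r* − σ_{r+1}* > 2‖E‖, then ‖(UUᵀ − U*U*ᵀ) M*‖ ≤ 4σ_r*‖E‖ / (σ_r* − σ_{r+1}*). -/

import Mathlib

open Matrix BigOperators

/-- The spectral norm of a matrix, as the supremum of `‖M x‖₂` over unit vectors. -/
noncomputable def specNorm {m n : ℕ} (M : Matrix (Fin m) (Fin n) ℝ) : ℝ :=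
  sSup {t : ℝ | ∃ x : Fin n → ℝ, (∑ i, x i ^ 2) = 1 ∧
    t = Real.sqrt (∑ j, (M.mulVec x j) ^ 2)}

/-!
Cut both SVDs after the `r`-th triple, `M* = U₁*Σ₁*V₁*ᵀ + U₂*Σ₂*V₂*ᵀ` and `M = U₁Σ₁V₁ᵀ + U₂Σ₂V₂ᵀ`.
As `U*` and `U` are complete orthonormal bases,
`(U₁U₁ᵀ − U₁*U₁*ᵀ) M* = U₁ (U₁ᵀU₂*) Σ₂* V₂*ᵀ − U₂ (U₂ᵀU₁*Σ₁*) V₁*ᵀ`,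
so the target is at most `σ*_{r+1} ‖U₂*ᵀU₁‖ + ‖U₂ᵀU₁*Σ₁*‖`.

Wedin's argument bounds both terms: `U₂ᵀU₁*Σ₁* = U₂ᵀM*V₁* = Σ₂V₂ᵀV₁* − U₂ᵀEV₁*`, and the same
identity for the transposed matrices exchanges `‖U₂ᵀU₁*‖` and `‖V₂ᵀV₁*‖`; solving the two
inequalities gives `(σ*_r − σ_{r+1}) ‖U₂ᵀU₁*‖ ≤ ‖E‖`, and symmetrically for `‖U₂*ᵀU₁‖`.
By Weyl's inequality `|σ_k − σ*_k| ≤ ‖E‖` both gaps exceed `σ*_r − σ*_{r+1} − ‖E‖`, hence half of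
`σ*_r − σ*_{r+1}`, and adding the two terms gives the constant `4`.
-/

open scoped Matrix.Norms.L2Operator

theorem specNorm_eq_l2_opNorm {m n : ℕ} (M : Matrix (Fin m) (Fin n) ℝ) : specNorm M = ‖M‖ := by
  rw [l2_opNorm_def, ← ContinuousLinearMap.sSup_sphere_eq_norm, specNorm]
  congr 1
  ext t
  constructor
  · rintro ⟨x, hx, rfl⟩
    exact ⟨WithLp.toLp 2 x, by simp [EuclideanSpace.norm_eq, hx], by simp [EuclideanSpace.norm_eq]⟩
  · rintro ⟨x, hx, rfl⟩
    exact ⟨x.ofLp, by simpa [EuclideanSpace.norm_eq] using hx, by simp [EuclideanSpace.norm_eq]⟩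

namespace Matrix

variable {l m n : Type*} [Fintype l] [Fintype m] [Fintype n]

theorem exists_ne_zero_mul_eq_zero_of_card_lt {K : Type*} [Field K] (C : Matrix m n K)
    (h : Fintype.card m < Fintype.card n) : ∃ W : Matrix n Unit K, W ≠ 0 ∧ C * W = 0 := by
  have hker : LinearMap.ker C.mulVecLin ≠ ⊥ :=
    LinearMap.ker_ne_bot_of_finrank_lt (by simpa [Module.finrank_fintype_fun_eq_card] using h)
  obtain ⟨w, hw, hw0⟩ := Submodule.exists_mem_ne_zero_of_ne_bot hker
  refine ⟨replicateCol Unit w, by simpa using hw0, ?_⟩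
  rw [← replicateCol_mulVec, show C *ᵥ w = 0 from hw, replicateCol_zero]

variable [DecidableEq n]

theorem l2_opNorm_transpose [DecidableEq m] (A : Matrix m n ℝ) : ‖Aᵀ‖ = ‖A‖ := by
  rw [← conjTranspose_eq_transpose_of_trivial, l2_opNorm_conjTranspose]

theorem l2_opNorm_le_one_of_transpose_mul_self_eq_one {Q : Matrix m n ℝ}
    (hQ : Qᵀ * Q = 1) : ‖Q‖ ≤ 1 := by
  have h : ‖Q‖ * ‖Q‖ ≤ 1 := by
    rw [← l2_opNorm_conjTranspose_mul_self, conjTranspose_eq_transpose_of_trivial, hQ,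
      ← diagonal_one, l2_opNorm_diagonal]
    exact pi_norm_le_iff_of_nonneg zero_le_one |>.2 fun _ ↦ by simp
  nlinarith [norm_nonneg Q]

theorem l2_opNorm_transpose_le_one_of_transpose_mul_self_eq_one [DecidableEq m] {Q : Matrix m n ℝ}
    (hQ : Qᵀ * Q = 1) : ‖Qᵀ‖ ≤ 1 :=
  l2_opNorm_transpose Q ▸ l2_opNorm_le_one_of_transpose_mul_self_eq_one hQ

theorem l2_opNorm_mul_of_transpose_mul_self_eq_one [DecidableEq l] [DecidableEq m]
    {Q : Matrix m n ℝ} (hQ : Qᵀ * Q = 1) (X : Matrix n l ℝ) : ‖Q * X‖ = ‖X‖ := by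
  refine le_antisymm ?_ ?_
  · exact (l2_opNorm_mul Q X).trans
      (mul_le_of_le_one_left (norm_nonneg X) (l2_opNorm_le_one_of_transpose_mul_self_eq_one hQ))
  · calc ‖X‖ = ‖Qᵀ * (Q * X)‖ := by rw [← Matrix.mul_assoc, hQ, Matrix.one_mul]
      _ ≤ ‖Qᵀ‖ * ‖Q * X‖ := l2_opNorm_mul _ _
      _ ≤ ‖Q * X‖ := mul_le_of_le_one_left (norm_nonneg _)
        (l2_opNorm_transpose_le_one_of_transpose_mul_self_eq_one hQ)

theorem l2_opNorm_mul_transpose_of_transpose_mul_self_eq_one [DecidableEq l] [DecidableEq m]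
    {Q : Matrix m n ℝ} (hQ : Qᵀ * Q = 1) (X : Matrix l n ℝ) : ‖X * Qᵀ‖ = ‖X‖ := by
  rw [← l2_opNorm_transpose, transpose_mul, transpose_transpose,
    l2_opNorm_mul_of_transpose_mul_self_eq_one hQ, l2_opNorm_transpose]

theorem mul_l2_opNorm_le_diagonal_mul [DecidableEq m] {d : m → ℝ} {c : ℝ} (hd : ∀ i, c ≤ d i)
    (X : Matrix m n ℝ) : c * ‖X‖ ≤ ‖diagonal d * X‖ := by
  rcases le_or_gt c 0 with hc | hc
  · exact (mul_nonpos_of_nonpos_of_nonneg hc (norm_nonneg X)).trans (norm_nonneg _)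
  have hd0 : ∀ i, d i ≠ 0 := fun i ↦ (hc.trans_le (hd i)).ne'
  have hinv : ‖diagonal d⁻¹‖ ≤ c⁻¹ := by
    rw [l2_opNorm_diagonal]
    refine pi_norm_le_iff_of_nonneg (by positivity) |>.2 fun i ↦ ?_
    rw [Pi.inv_apply, norm_inv, Real.norm_of_nonneg (hc.le.trans (hd i))]
    exact inv_anti₀ hc (hd i)
  calc c * ‖X‖ = c * ‖diagonal d⁻¹ * (diagonal d * X)‖ := by
        rw [← Matrix.mul_assoc, diagonal_mul_diagonal]
        simp [Pi.inv_apply, inv_mul_cancel₀ (hd0 _)]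
    _ ≤ c * (c⁻¹ * ‖diagonal d * X‖) := by
        gcongr
        exact (l2_opNorm_mul _ _).trans (by gcongr)
    _ = ‖diagonal d * X‖ := by field_simp

theorem mul_l2_opNorm_le_mul_diagonal [DecidableEq m] {d : n → ℝ} {c : ℝ} (hd : ∀ i, c ≤ d i)
    (X : Matrix m n ℝ) : c * ‖X‖ ≤ ‖X * diagonal d‖ := by
  simpa [← l2_opNorm_transpose X, ← l2_opNorm_transpose (X * diagonal d), transpose_mul]
    using mul_l2_opNorm_le_diagonal_mul hd Xᵀ

end Matrix

def finTail {n : ℕ} (k : ℕ) (j : Fin (n - k)) : Fin n := ⟨k + j, by omega⟩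

theorem finTail_injective {n k : ℕ} : Function.Injective (finTail (n := n) k) :=
  fun a b h ↦ Fin.ext (by have := congrArg Fin.val h; simp only [finTail] at this; omega)

theorem castLE_ne_finTail {n k : ℕ} (hk : k ≤ n) (i : Fin k) (j : Fin (n - k)) :
    Fin.castLE hk i ≠ finTail k j :=
  fun h ↦ by have := congrArg Fin.val h; simp only [Fin.val_castLE, finTail] at this; omega

theorem Fin.sum_univ_castLE_add_finTail {M : Type*} [AddCommMonoid M] {n k : ℕ} (hk : k ≤ n)
    (f : Fin n → M) :
    ∑ i, f i = ∑ i : Fin k, f (Fin.castLE hk i) + ∑ j : Fin (n - k), f (finTail k j) := by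
  have h : k + (n - k) = n := by omega
  rw [← Fintype.sum_equiv (finCongr h) (f ∘ finCongr h) f fun _ ↦ rfl, Fin.sum_univ_add]
  rfl

theorem Antitone.le_comp_castLE {α : Type*} [Preorder α] {N k : ℕ} {σ : Fin N → α}
    (hσ : Antitone σ) (hk : k ≤ N) {j : Fin N} (hj : k ≤ j + 1) (i : Fin k) :
    σ j ≤ σ (Fin.castLE hk i) :=
  hσ (Fin.le_def.2 (by simp only [Fin.val_castLE]; omega))

theorem Antitone.norm_comp_finTail_le {N k : ℕ} {σ : Fin N → ℝ} (hσ : Antitone σ)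
    (h0 : ∀ i, 0 ≤ σ i) {j : Fin N} (hj : (j : ℕ) ≤ k) :
    ‖fun i : Fin (N - k) ↦ σ (finTail k i)‖ ≤ σ j :=
  pi_norm_le_iff_of_nonneg (h0 j) |>.2 fun i ↦ by
    rw [Real.norm_of_nonneg (h0 _)]
    exact hσ (Fin.le_def.2 (by simp only [finTail]; omega))

namespace Matrix

theorem mul_transpose_eq_castLE_add_finTail {m n R : Type*} [CommRing R] {N k : ℕ} (hk : k ≤ N)
    (X : Matrix m (Fin N) R) (Y : Matrix n (Fin N) R) :
    X * Yᵀ = X.submatrix id (Fin.castLE hk) * (Y.submatrix id (Fin.castLE hk))ᵀ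
      + X.submatrix id (finTail k) * (Y.submatrix id (finTail k))ᵀ := by
  ext a b
  simp only [add_apply, mul_apply, transpose_apply, submatrix_apply, id_eq]
  exact Fin.sum_univ_castLE_add_finTail hk _

theorem transpose_submatrix_id_mul_submatrix_id {m R : Type*} [Fintype m] [CommRing R]
    {N : ℕ} {ι κ : Type*} (w : Matrix m (Fin N) R) (f : ι → Fin N) (g : κ → Fin N) :
    (w.submatrix id f)ᵀ * w.submatrix id g = (wᵀ * w).submatrix f g := by
  rw [submatrix_mul _ _ _ id _ Function.bijective_id, transpose_submatrix]

theorem transpose_submatrix_id_mul_submatrix_id_self {m R : Type*} [Fintype m] [CommRing R]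
    {N : ℕ} {ι : Type*} [DecidableEq ι] {w : Matrix m (Fin N) R} (hw : wᵀ * w = 1) {f : ι → Fin N}
    (hf : Function.Injective f) : (w.submatrix id f)ᵀ * w.submatrix id f = 1 := by
  rw [transpose_submatrix_id_mul_submatrix_id, hw, submatrix_one _ hf]

theorem transpose_submatrix_id_mul_submatrix_id_eq_zero {m R : Type*} [Fintype m] [CommRing R]
    {N : ℕ} {ι κ : Type*} {w : Matrix m (Fin N) R} (hw : wᵀ * w = 1) {f : ι → Fin N} {g : κ → Fin N}
    (hfg : ∀ i j, f i ≠ g j) : (w.submatrix id f)ᵀ * w.submatrix id g = 0 := by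
  rw [transpose_submatrix_id_mul_submatrix_id, hw]
  ext i j
  simp [hfg i j]

theorem mul_transpose_sub_mul_transpose_mul_eq {m n ι κ ι' κ' R : Type*} [Fintype m]
    [Fintype ι] [Fintype κ] [Fintype ι'] [Fintype κ'] [DecidableEq m] [CommRing R]
    {U₁ : Matrix m ι R} {U₂ : Matrix m κ R} {W₁ : Matrix m ι' R} {W₂ : Matrix m κ' R}
    (hU : U₁ * U₁ᵀ + U₂ * U₂ᵀ = 1) (hW : W₁ * W₁ᵀ + W₂ * W₂ᵀ = 1) (A : Matrix m n R) :
    (W₁ * W₁ᵀ - U₁ * U₁ᵀ) * A = W₁ * (W₁ᵀ * U₂) * (U₂ᵀ * A) - W₂ * (W₂ᵀ * U₁) * (U₁ᵀ * A) := by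
  calc (W₁ * W₁ᵀ - U₁ * U₁ᵀ) * A
      = W₁ * W₁ᵀ * (U₁ * U₁ᵀ + U₂ * U₂ᵀ) * A - (W₁ * W₁ᵀ + W₂ * W₂ᵀ) * (U₁ * U₁ᵀ) * A := by
        rw [hU, hW, Matrix.mul_one, Matrix.one_mul, Matrix.sub_mul]
    _ = _ := by
        simp only [Matrix.mul_add, Matrix.add_mul, Matrix.mul_assoc]
        abel

end Matrix

structure BlockSVD {m n : Type*} [Fintype m] [Fintype n] (A : Matrix m n ℝ)
    (ι κ : Type*) [Fintype ι] [Fintype κ] [DecidableEq ι] [DecidableEq κ] where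
  U₁ : Matrix m ι ℝ
  U₂ : Matrix m κ ℝ
  V₁ : Matrix n ι ℝ
  V₂ : Matrix n κ ℝ
  d₁ : ι → ℝ
  d₂ : κ → ℝ
  U₁_orth : U₁ᵀ * U₁ = 1
  U₂_orth : U₂ᵀ * U₂ = 1
  U₁_U₂ : U₁ᵀ * U₂ = 0
  V₁_orth : V₁ᵀ * V₁ = 1
  V₂_orth : V₂ᵀ * V₂ = 1
  V₁_V₂ : V₁ᵀ * V₂ = 0
  eq : A = U₁ * diagonal d₁ * V₁ᵀ + U₂ * diagonal d₂ * V₂ᵀ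

namespace BlockSVD

section

variable {m n ι κ : Type*} [Fintype m] [Fintype n] [Fintype ι] [Fintype κ] [DecidableEq ι]
  [DecidableEq κ] {A : Matrix m n ℝ}

def transpose (S : BlockSVD A ι κ) : BlockSVD Aᵀ ι κ where
  U₁ := S.V₁
  U₂ := S.V₂
  V₁ := S.U₁
  V₂ := S.U₂
  d₁ := S.d₁
  d₂ := S.d₂
  U₁_orth := S.V₁_orth
  U₂_orth := S.V₂_orth
  U₁_U₂ := S.V₁_V₂
  V₁_orth := S.U₁_orth
  V₂_orth := S.U₂_orth
  V₁_V₂ := S.U₁_U₂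
  eq := by
    simpa only [transpose_add, transpose_mul, transpose_transpose, diagonal_transpose,
      Matrix.mul_assoc] using congrArg Matrix.transpose S.eq

def swap (S : BlockSVD A ι κ) : BlockSVD A κ ι where
  U₁ := S.U₂
  U₂ := S.U₁
  V₁ := S.V₂
  V₂ := S.V₁
  d₁ := S.d₂
  d₂ := S.d₁
  U₁_orth := S.U₂_orth
  U₂_orth := S.U₁_orth
  U₁_U₂ := by rw [← transpose_transpose S.U₁, ← transpose_mul, S.U₁_U₂, transpose_zero]
  V₁_orth := S.V₂_orth
  V₂_orth := S.V₁_orth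
  V₁_V₂ := by rw [← transpose_transpose S.V₁, ← transpose_mul, S.V₁_V₂, transpose_zero]
  eq := S.eq.trans (add_comm _ _)

theorem mul_V₁ (S : BlockSVD A ι κ) : A * S.V₁ = S.U₁ * diagonal S.d₁ := by
  have hV₂V₁ : S.V₂ᵀ * S.V₁ = 0 := S.swap.V₁_V₂
  calc A * S.V₁ = (S.U₁ * diagonal S.d₁ * S.V₁ᵀ + S.U₂ * diagonal S.d₂ * S.V₂ᵀ) * S.V₁ :=
        congrArg (· * S.V₁) S.eq
    _ = S.U₁ * diagonal S.d₁ := by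
        rw [Matrix.add_mul, Matrix.mul_assoc _ S.V₁ᵀ, Matrix.mul_assoc _ S.V₂ᵀ, S.V₁_orth,
          hV₂V₁, Matrix.mul_one, Matrix.mul_zero, add_zero]

theorem U₁_transpose_mul (S : BlockSVD A ι κ) : S.U₁ᵀ * A = diagonal S.d₁ * S.V₁ᵀ := by
  have h := congrArg Matrix.transpose S.transpose.mul_V₁
  rwa [transpose_mul, transpose_mul, transpose_transpose, diagonal_transpose] at h

theorem U₂_transpose_mul (S : BlockSVD A ι κ) : S.U₂ᵀ * A = diagonal S.d₂ * S.V₂ᵀ :=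
  S.swap.U₁_transpose_mul

end

section ofSum

variable {m n : Type*} [Fintype m] [Fintype n] {N : ℕ} {A : Matrix m n ℝ} {σ : Fin N → ℝ}
  {u : Matrix m (Fin N) ℝ} {v : Matrix n (Fin N) ℝ}

def ofSum (k : ℕ) (hk : k ≤ N) (hu : uᵀ * u = 1) (hv : vᵀ * v = 1)
    (hA : ∀ a b, A a b = ∑ i, σ i * u a i * v b i) : BlockSVD A (Fin k) (Fin (N - k)) where
  U₁ := u.submatrix id (Fin.castLE hk)
  U₂ := u.submatrix id (finTail k)
  V₁ := v.submatrix id (Fin.castLE hk)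
  V₂ := v.submatrix id (finTail k)
  d₁ i := σ (Fin.castLE hk i)
  d₂ j := σ (finTail k j)
  U₁_orth := transpose_submatrix_id_mul_submatrix_id_self hu (Fin.castLE_injective hk)
  U₂_orth := transpose_submatrix_id_mul_submatrix_id_self hu finTail_injective
  U₁_U₂ := transpose_submatrix_id_mul_submatrix_id_eq_zero hu (castLE_ne_finTail hk)
  V₁_orth := transpose_submatrix_id_mul_submatrix_id_self hv (Fin.castLE_injective hk)
  V₂_orth := transpose_submatrix_id_mul_submatrix_id_self hv finTail_injective
  V₁_V₂ := transpose_submatrix_id_mul_submatrix_id_eq_zero hv (castLE_ne_finTail hk)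
  eq := by
    have hA' : A = u * diagonal σ * vᵀ := by
      ext a b
      rw [hA, mul_apply]
      exact Finset.sum_congr rfl fun i _ ↦ by
        rw [mul_diagonal, transpose_apply, mul_comm (σ i)]
    rw [hA', mul_transpose_eq_castLE_add_finTail hk]
    congr 2 <;> ext <;> simp [mul_diagonal]

end ofSum

section perturbation

variable {m n ι κ ι' κ' : Type*} [Fintype m] [Fintype n] [DecidableEq m] [DecidableEq n]
  [Fintype ι] [Fintype κ] [DecidableEq ι] [DecidableEq κ]
  [Fintype ι'] [Fintype κ'] [DecidableEq ι'] [DecidableEq κ'] {A B : Matrix m n ℝ}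

theorem le_norm_d₂_add_norm_sub (S : BlockSVD A ι κ) (S' : BlockSVD B ι' κ')
    (hcard : Fintype.card ι' < Fintype.card ι) {s : ℝ} (hs : ∀ i, s ≤ S.d₁ i) :
    s ≤ ‖S'.d₂‖ + ‖A - B‖ := by
  -- `X` lies in the span of the leading right singular vectors of `A` and is orthogonal to
  -- those of `B`, so `A` stretches it by at least `s` and `B` by at most `‖S'.d₂‖`.
  obtain ⟨W, hW0, hW⟩ := exists_ne_zero_mul_eq_zero_of_card_lt (S'.V₁ᵀ * S.V₁) hcard
  set X := S.V₁ * W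
  have hX : ‖X‖ = ‖W‖ := l2_opNorm_mul_of_transpose_mul_self_eq_one S.V₁_orth W
  have hAX : A * X = S.U₁ * (diagonal S.d₁ * W) := by
    rw [← Matrix.mul_assoc, S.mul_V₁, Matrix.mul_assoc]
  have hBX : B * X = S'.U₂ * (diagonal S'.d₂ * (S'.V₂ᵀ * X)) := by
    calc B * X = (S'.U₁ * diagonal S'.d₁ * S'.V₁ᵀ + S'.U₂ * diagonal S'.d₂ * S'.V₂ᵀ) * X :=
          congrArg (· * X) S'.eq
      _ = _ := by
          rw [Matrix.add_mul, Matrix.mul_assoc _ S'.V₁ᵀ, ← Matrix.mul_assoc S'.V₁ᵀ, hW,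
            Matrix.mul_zero, zero_add, Matrix.mul_assoc, Matrix.mul_assoc]
  have hBX_le : ‖B * X‖ ≤ ‖S'.d₂‖ * ‖W‖ := by
    rw [hBX, l2_opNorm_mul_of_transpose_mul_self_eq_one S'.U₂_orth, ← l2_opNorm_diagonal, ← hX]
    refine (l2_opNorm_mul _ _).trans (mul_le_mul_of_nonneg_left ?_ (norm_nonneg _))
    exact (l2_opNorm_mul _ _).trans (mul_le_of_le_one_left (norm_nonneg _)
      (l2_opNorm_transpose_le_one_of_transpose_mul_self_eq_one S'.V₂_orth))
  have key : s * ‖W‖ ≤ (‖S'.d₂‖ + ‖A - B‖) * ‖W‖ :=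
    calc s * ‖W‖ ≤ ‖diagonal S.d₁ * W‖ := mul_l2_opNorm_le_diagonal_mul hs W
      _ = ‖B * X + (A - B) * X‖ := by
          rw [Matrix.sub_mul, add_sub_cancel, hAX,
            l2_opNorm_mul_of_transpose_mul_self_eq_one S.U₁_orth]
      _ ≤ ‖B * X‖ + ‖(A - B) * X‖ := norm_add_le _ _
      _ ≤ ‖S'.d₂‖ * ‖W‖ + ‖A - B‖ * ‖W‖ :=
          add_le_add hBX_le (hX ▸ l2_opNorm_mul _ _)
      _ = (‖S'.d₂‖ + ‖A - B‖) * ‖W‖ := by ring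
  exact le_of_mul_le_mul_right key (norm_pos_iff.2 hW0)

theorem norm_U₂_transpose_mul_U₁_mul_diagonal_le (S : BlockSVD A ι κ)
    (S' : BlockSVD B ι' κ') :
    ‖S'.U₂ᵀ * S.U₁ * diagonal S.d₁‖ ≤ ‖S'.d₂‖ * ‖S'.V₂ᵀ * S.V₁‖ + ‖B - A‖ := by
  have h : S'.U₂ᵀ * S.U₁ * diagonal S.d₁
      = diagonal S'.d₂ * (S'.V₂ᵀ * S.V₁) - S'.U₂ᵀ * (B - A) * S.V₁ := by
    rw [Matrix.mul_sub, Matrix.sub_mul, S'.U₂_transpose_mul, Matrix.mul_assoc S'.U₂ᵀ A,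
      S.mul_V₁]
    simp only [Matrix.mul_assoc]
    abel
  rw [h, ← l2_opNorm_diagonal]
  refine (norm_sub_le _ _).trans (add_le_add (l2_opNorm_mul _ _) ?_)
  calc ‖S'.U₂ᵀ * (B - A) * S.V₁‖ ≤ ‖S'.U₂ᵀ‖ * ‖B - A‖ * ‖S.V₁‖ :=
        (l2_opNorm_mul _ _).trans (by gcongr; exact l2_opNorm_mul _ _)
    _ ≤ 1 * ‖B - A‖ * 1 := by
        gcongr
        · exact l2_opNorm_transpose_le_one_of_transpose_mul_self_eq_one S'.U₂_orth
        · exact l2_opNorm_le_one_of_transpose_mul_self_eq_one S.V₁_orth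
    _ = ‖B - A‖ := by ring

theorem sub_mul_norm_U₂_transpose_mul_U₁_le (S : BlockSVD A ι κ) (S' : BlockSVD B ι' κ')
    {s t : ℝ} (hs : ∀ i, s ≤ S.d₁ i) (ht : ‖S'.d₂‖ ≤ t) (hts : t < s) :
    (s - t) * ‖S'.U₂ᵀ * S.U₁‖ ≤ ‖B - A‖ := by
  set a := ‖S'.U₂ᵀ * S.U₁‖
  set b := ‖S'.V₂ᵀ * S.V₁‖
  set d := ‖S'.d₂‖
  have ha : s * a ≤ d * b + ‖B - A‖ :=
    (mul_l2_opNorm_le_mul_diagonal hs _).trans (S.norm_U₂_transpose_mul_U₁_mul_diagonal_le S')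
  have hb : s * b ≤ d * a + ‖B - A‖ := by
    have := (mul_l2_opNorm_le_mul_diagonal hs _).trans
      (S.transpose.norm_U₂_transpose_mul_U₁_mul_diagonal_le S'.transpose)
    rwa [← transpose_sub, l2_opNorm_transpose] at this
  have hd : 0 ≤ d := norm_nonneg _
  have ha0 : 0 ≤ a := norm_nonneg _
  have hsd : (s + d) * ((s - d) * a) ≤ (s + d) * ‖B - A‖ := by
    nlinarith [mul_le_mul_of_nonneg_left ha (hd.trans (ht.trans hts.le)),
      mul_le_mul_of_nonneg_left hb hd]
  calc (s - t) * a ≤ (s - d) * a := by gcongr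
    _ ≤ ‖B - A‖ := le_of_mul_le_mul_left hsd (by linarith)

theorem norm_projection_sub_mul_le (S : BlockSVD A ι κ) (S' : BlockSVD B ι' κ')
    (hS : S.U₁ * S.U₁ᵀ + S.U₂ * S.U₂ᵀ = 1) (hS' : S'.U₁ * S'.U₁ᵀ + S'.U₂ * S'.U₂ᵀ = 1) :
    ‖(S'.U₁ * S'.U₁ᵀ - S.U₁ * S.U₁ᵀ) * A‖
      ≤ ‖S.U₂ᵀ * S'.U₁‖ * ‖S.d₂‖ + ‖S'.U₂ᵀ * S.U₁ * diagonal S.d₁‖ := by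
  rw [mul_transpose_sub_mul_transpose_mul_eq hS hS', S.U₂_transpose_mul, S.U₁_transpose_mul]
  refine (norm_sub_le _ _).trans (add_le_add ?_ (le_of_eq ?_))
  · rw [← Matrix.mul_assoc, l2_opNorm_mul_transpose_of_transpose_mul_self_eq_one S.V₂_orth,
      Matrix.mul_assoc, l2_opNorm_mul_of_transpose_mul_self_eq_one S'.U₁_orth, ← l2_opNorm_diagonal,
      ← l2_opNorm_transpose (S.U₂ᵀ * S'.U₁), transpose_mul, transpose_transpose]
    exact l2_opNorm_mul _ _
  · rw [← Matrix.mul_assoc, l2_opNorm_mul_transpose_of_transpose_mul_self_eq_one S.V₁_orth,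
      Matrix.mul_assoc, l2_opNorm_mul_of_transpose_mul_self_eq_one S'.U₂_orth]

theorem norm_projection_sub_mul_le_of_gap (S : BlockSVD A ι κ) (S' : BlockSVD B ι' κ')
    (hS : S.U₁ * S.U₁ᵀ + S.U₂ * S.U₂ᵀ = 1) (hS' : S'.U₁ * S'.U₁ᵀ + S'.U₂ * S'.U₂ᵀ = 1)
    {s₁ s₂ : ℝ} (hs₁ : ∀ i, s₁ ≤ S.d₁ i) (hs₂ : ‖S.d₂‖ ≤ s₂)
    (hs₁' : ∀ i, s₁ - ‖B - A‖ ≤ S'.d₁ i) (hs₂' : ‖S'.d₂‖ ≤ s₂ + ‖B - A‖)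
    (hgap : 2 * ‖B - A‖ < s₁ - s₂) :
    ‖(S'.U₁ * S'.U₁ᵀ - S.U₁ * S.U₁ᵀ) * A‖ ≤ 4 * s₁ * ‖B - A‖ / (s₁ - s₂) := by
  set e := ‖B - A‖
  set a := ‖S.U₂ᵀ * S'.U₁‖
  set b := ‖S'.V₂ᵀ * S.V₁‖
  have he : 0 ≤ e := norm_nonneg _
  have ha0 : 0 ≤ a := norm_nonneg _
  have hb0 : 0 ≤ b := norm_nonneg _
  have hs₂0 : 0 ≤ s₂ := (norm_nonneg _).trans hs₂
  have ha : (s₁ - e - s₂) * a ≤ e := by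
    simpa only [norm_sub_rev A B] using
      S'.sub_mul_norm_U₂_transpose_mul_U₁_le S hs₁' hs₂ (by linarith)
  have hb : (s₁ - (s₂ + e)) * b ≤ e := by
    have := S.transpose.sub_mul_norm_U₂_transpose_mul_U₁_le S'.transpose hs₁ hs₂' (by linarith)
    rwa [← transpose_sub, l2_opNorm_transpose] at this
  have hN : ‖(S'.U₁ * S'.U₁ᵀ - S.U₁ * S.U₁ᵀ) * A‖ ≤ a * s₂ + ((s₂ + e) * b + e) :=
    (S.norm_projection_sub_mul_le S' hS hS').trans <| add_le_add
      (mul_le_mul_of_nonneg_left hs₂ ha0)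
      ((S.norm_U₂_transpose_mul_U₁_mul_diagonal_le S').trans (by gcongr))
  have hδ : 0 ≤ s₁ - s₂ - 2 * e := by linarith
  have ha' : a * (s₁ - s₂) ≤ 2 * e := by nlinarith [mul_nonneg ha0 hδ]
  have hb' : b * (s₁ - s₂) ≤ 2 * e := by nlinarith [mul_nonneg hb0 hδ]
  rw [le_div_iff₀ (by linarith)]
  nlinarith [mul_le_mul_of_nonneg_right hN (by linarith : 0 ≤ s₁ - s₂),
    mul_le_mul_of_nonneg_left ha' hs₂0, mul_le_mul_of_nonneg_left hb' (by linarith : 0 ≤ s₂ + e),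
    mul_nonneg he (by linarith : 0 ≤ 3 * (s₁ - s₂) - 2 * e)]

end perturbation

end BlockSVD

theorem singularValue_le_add_l2_opNorm_sub {m n : Type*} [Fintype m] [Fintype n] [DecidableEq m]
    [DecidableEq n] {N : ℕ} {A B : Matrix m n ℝ} {σa σb : Fin N → ℝ} {ua ub : Matrix m (Fin N) ℝ}
    {va vb : Matrix n (Fin N) ℝ} (hua : uaᵀ * ua = 1) (hva : vaᵀ * va = 1) (hub : ubᵀ * ub = 1)
    (hvb : vbᵀ * vb = 1) (hσa : Antitone σa) (hσb : Antitone σb) (hσb0 : ∀ i, 0 ≤ σb i)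
    (hA : ∀ a b, A a b = ∑ i, σa i * ua a i * va b i)
    (hB : ∀ a b, B a b = ∑ i, σb i * ub a i * vb b i) (k : Fin N) :
    σa k ≤ σb k + ‖A - B‖ :=
  ((BlockSVD.ofSum (k + 1) k.isLt hua hva hA).le_norm_d₂_add_norm_sub
      (BlockSVD.ofSum k k.isLt.le hub hvb hB) (by simp) (hσa.le_comp_castLE _ le_rfl)).trans
    (by gcongr; exact hσb.norm_comp_finTail_le hσb0 le_rfl)

/-- Let `M = M* + E ∈ ℝ^{n₁×n₂}` with full SVDs
`M* = Σ_i σ*_i u*_i v*_iᵀ` and `M = Σ_i σ_i u_i v_iᵀ` (singular values in decreasing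
order, `u*, u` having orthonormal columns, `v*, v` having orthonormal columns), and let
`U*` (resp. `U`) collect the top-`r` left singular vectors of `M*` (resp. `M`).
If `σ*_r − σ*_{r+1} > 2‖E‖`, then
`‖(UUᵀ − U*U*ᵀ) M*‖ ≤ 4 σ*_r ‖E‖ / (σ*_r − σ*_{r+1})`. -/
theorem projected_subspace_perturbation
    (n₁ n₂ r : ℕ) (hr : r < n₁)
    (Ms E : Matrix (Fin n₁) (Fin n₂) ℝ)
    (σs σ : Fin n₁ → ℝ)
    (us u : Matrix (Fin n₁) (Fin n₁) ℝ)
    (vs v : Matrix (Fin n₂) (Fin n₁) ℝ)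
    (hus : usᵀ * us = 1) (hu : uᵀ * u = 1)
    (hvs : vsᵀ * vs = 1) (hv : vᵀ * v = 1)
    (hσs_mono : ∀ i j : Fin n₁, i ≤ j → σs j ≤ σs i)
    (hσs_nonneg : ∀ i, 0 ≤ σs i)
    (hσ_mono : ∀ i j : Fin n₁, i ≤ j → σ j ≤ σ i)
    (hσ_nonneg : ∀ i, 0 ≤ σ i)
    (hMs : ∀ a b, Ms a b = ∑ i, σs i * us a i * vs b i)
    (hM : ∀ a b, Ms a b + E a b = ∑ i, σ i * u a i * v b i)
    (hgap : 2 * specNorm E < σs ⟨r - 1, by omega⟩ - σs ⟨r, hr⟩) :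
    specNorm
      ((Matrix.of fun a b : Fin n₁ =>
          (∑ l : Fin r, u a (Fin.castLE hr.le l) * u b (Fin.castLE hr.le l))
            - ∑ l : Fin r, us a (Fin.castLE hr.le l) * us b (Fin.castLE hr.le l)) * Ms)
      ≤ 4 * σs ⟨r - 1, by omega⟩ * specNorm E
          / (σs ⟨r - 1, by omega⟩ - σs ⟨r, hr⟩) := by
  set M := Ms + E
  have hM' : ∀ a b, M a b = ∑ i, σ i * u a i * v b i := hM
  have hσs : Antitone σs := fun i j hij ↦ hσs_mono i j hij
  have hσ : Antitone σ := fun i j hij ↦ hσ_mono i j hij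
  have hE : specNorm E = ‖M - Ms‖ := by rw [specNorm_eq_l2_opNorm, add_sub_cancel_left]
  have weyl_head := singularValue_le_add_l2_opNorm_sub hus hvs hu hv hσs hσ hσ_nonneg hMs hM'
    ⟨r - 1, by omega⟩
  have weyl_tail := singularValue_le_add_l2_opNorm_sub hu hv hus hvs hσ hσs hσs_nonneg hM' hMs
    ⟨r, hr⟩
  rw [norm_sub_rev] at weyl_head
  set S := BlockSVD.ofSum r hr.le hus hvs hMs
  set S' := BlockSVD.ofSum r hr.le hu hv hM'
  change specNorm ((S'.U₁ * S'.U₁ᵀ - S.U₁ * S.U₁ᵀ) * Ms) ≤ _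
  rw [specNorm_eq_l2_opNorm]
  rw [hE] at hgap ⊢
  exact S.norm_projection_sub_mul_le_of_gap S'
    ((mul_transpose_eq_castLE_add_finTail hr.le us us).symm.trans (mul_eq_one_comm.1 hus))
    ((mul_transpose_eq_castLE_add_finTail hr.le u u).symm.trans (mul_eq_one_comm.1 hu))
    (hσs.le_comp_castLE hr.le (by simp; omega)) (hσs.norm_comp_finTail_le hσs_nonneg le_rfl)
    (fun i ↦ (sub_le_iff_le_add.2 weyl_head).trans (hσ.le_comp_castLE hr.le (by simp; omega) i))
    ((hσ.norm_comp_finTail_le hσ_nonneg le_rfl).trans weyl_tail) hgap
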